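/- For a string α and a sorted list S of strings, the maximum over β ∈ S of lcp(α, β) equals the maximum of lcp(α, pred) and lcp(α, succ), where pred and succ are the predecessor and successor of α in S (when they exist). -/

import Mathlib

/-- Length of the longest common prefix of two strings. -/
def lcp {α : Type*} [DecidableEq α] : List α → List α → ℕ
  | a :: s, b :: t => if a = b then lcp s t + 1 else 0
  | _, _ => 0

theorem lcp_nil_right {α : Type*} [DecidableEq α] (a : List α) : lcp a [] = 0 := by
  cases a <;> rfl

theorem lcp_nil_left {α : Type*} [DecidableEq α] (a : List α) : lcp [] a = 0 := by
  cases a <;> rfl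

theorem head_le_head {α : Type*} [LinearOrder α] {x y : α} {b c : List α}
    (h : x :: b ≤ y :: c) : x ≤ y := by
  rcases lt_or_eq_of_le h with h | h
  · exact List.head_le_of_lt h
  · exact le_of_eq (List.cons.inj h).1

theorem tail_le_tail {α : Type*} [LinearOrder α] {x : α} {b c : List α}
    (h : x :: b ≤ x :: c) : b ≤ c := by
  rcases lt_or_eq_of_le h with h | h
  · exact le_of_lt (List.cons_lt_cons_self.mp h)
  · exact le_of_eq (List.cons.inj h).2

theorem tail_lt_tail {α : Type*} [LinearOrder α] {x : α} {b c : List α}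
    (h : x :: b < x :: c) : b < c := List.cons_lt_cons_self.mp h

theorem ne_nil_of_le_cons {α : Type*} [LinearOrder α] {x : α} {b c : List α}
    (h : x :: b ≤ c) : c ≠ [] := by
  rintro rfl
  rcases lt_or_eq_of_le h with h | h
  · exact List.not_lt_nil _ h
  · simp at h

theorem lcp_mono_left {α : Type*} [LinearOrder α] :
    ∀ (a b c : List α), b ≤ c → c ≤ a → lcp a b ≤ lcp a c := by
  intro a
  induction a with
  | nil => intro b c _ _; simp [lcp_nil_left]
  | cons x a' ih =>
    intro b c hbc hca
    cases b with
    | nil => simp [lcp_nil_right]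
    | cons y b' =>
      by_cases hxy : x = y
      · subst hxy
        obtain ⟨z, c', rfl⟩ := List.exists_cons_of_ne_nil (ne_nil_of_le_cons hbc)
        have hz : z = x := le_antisymm (head_le_head hca) (head_le_head hbc)
        subst hz
        simp only [lcp, if_pos rfl]
        exact Nat.succ_le_succ (ih b' c' (tail_le_tail hbc) (tail_le_tail hca))
      · simp only [lcp, if_neg hxy]
        exact Nat.zero_le _

theorem lcp_anti_right {α : Type*} [LinearOrder α] :
    ∀ (a c d : List α), a < c → c ≤ d → lcp a d ≤ lcp a c := by
  intro a
  induction a with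
  | nil => intro c d _ _; simp [lcp_nil_left]
  | cons x a' ih =>
    intro c d hac hcd
    cases d with
    | nil => simp [lcp_nil_right]
    | cons w d' =>
      by_cases hxw : x = w
      · subst hxw
        have hcne : c ≠ [] := by
          rintro rfl; exact List.not_lt_nil _ hac
        obtain ⟨z, c', rfl⟩ := List.exists_cons_of_ne_nil hcne
        have hz : z = x := le_antisymm (head_le_head hcd) (head_le_head (le_of_lt hac))
        subst hz
        simp only [lcp, if_pos rfl]
        exact Nat.succ_le_succ (ih c' d' (tail_lt_tail hac) (tail_le_tail hcd))
      · simp only [lcp, if_neg hxw]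
        exact Nat.zero_le _

/-- For a string `a` and a lexicographically sorted list `S` of strings, the maximum
over `b ∈ S` of `lcp(a, b)` equals the maximum of `lcp(a, pred)` and `lcp(a, succ)`,
where `pred` is the largest element of `S` that is `≤ a` and `succ` is the smallest
element of `S` that is `> a` (the lcp with a nonexistent neighbor being `0`). -/
theorem max_lcp_eq_max_pred_succ {α : Type*} [LinearOrder α]
    (a : List α) (S : List (List α)) (hS : S.Pairwise (· ≤ ·)) :
    ((S.map (lcp a)).foldr max 0) =
      max (((S.filter (fun b => b ≤ a)).getLast?).elim 0 (lcp a))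
          (((S.filter (fun b => a < b)).head?).elim 0 (lcp a)) := by
  induction S with
  | nil => simp
  | cons b S ih =>
    rw [List.pairwise_cons] at hS
    obtain ⟨hb, hS'⟩ := hS
    specialize ih hS'
    by_cases hba : b ≤ a
    · rw [List.filter_cons_of_pos (by simpa using hba),
        List.filter_cons_of_neg (by simpa using not_lt.2 hba)]
      simp only [List.map_cons, List.foldr_cons, ih]
      rcases hf : S.filter (fun c => c ≤ a) with _ | ⟨f, F'⟩
      · simp [hf]
      · rw [List.getLast?_cons_cons]
        -- the last element of the filtered list
        have hmem : (f :: F').getLast (by simp) ∈ f :: F' := List.getLast_mem _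
        have hlast : (f :: F').getLast? = some ((f :: F').getLast (by simp)) := by
          simp [List.getLast?_eq_getLast]
        have hlm : (f :: F').getLast (by simp) ∈ S.filter (fun c => c ≤ a) := by
          rw [hf]; exact hmem
        have hle_a : (f :: F').getLast (by simp) ≤ a := by
          have := List.of_mem_filter hlm
          simpa using this
        have hbl : b ≤ (f :: F').getLast (by simp) :=
          hb _ (List.mem_of_mem_filter hlm)
        have key : lcp a b ≤ lcp a ((f :: F').getLast (by simp)) :=
          lcp_mono_left a _ _ hbl hle_a
        rw [hlast]
        simp only [Option.elim]
        rw [max_eq_right (le_trans key (le_max_left _ _))]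
    · have hab : a < b := not_le.1 hba
      have hF2 : S.filter (fun c => c ≤ a) = [] := by
        rw [List.filter_eq_nil_iff]
        intro c hc
        simp only [decide_eq_true_eq, not_le]
        exact lt_of_lt_of_le hab (hb c hc)
      have hFnil : (b :: S).filter (fun c => c ≤ a) = [] := by
        rw [List.filter_cons_of_neg (by simpa using hab), hF2]
      rw [hFnil, List.filter_cons_of_pos (by simpa using hab)]
      simp only [List.map_cons, List.foldr_cons, ih, hF2]
      rcases hg : (S.filter (fun c => a < c)).head? with _ | g
      · simp
      · have hmem : g ∈ S.filter (fun c => a < c) := List.mem_of_mem_head? hg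
        have hbg : b ≤ g := hb _ (List.mem_of_mem_filter hmem)
        have hX : lcp a g ≤ lcp a b := lcp_anti_right a b g hab hbg
        simp only [List.head?_cons, List.getLast?_nil, Option.elim]
        rw [max_eq_right (Nat.zero_le _), max_eq_right (Nat.zero_le _), max_eq_left hX]
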